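/- Let β ∈ ℝ⁶ satisfy β₆ ≠ 0, β₆β₃ + β₄β₅ ≥ 0 and Δ₃(β) > 0. Then the set of singular points of the Killing tensor K(β), i.e. the set {x ∈ ℝ² : K¹¹(β)(x) = K²²(β)(x) and K¹²(β)(x) = 0} of points where the two eigenvalues of K(β) coincide, is exactly the two-element set {F₁(β), F₂(β)}, and F₁(β) ≠ F₂(β). -/

import Mathlib

open Real

/-- Component `K¹¹` of the general Killing two-tensor of the Euclidean plane. -/
def K11 (β : Fin 6 → ℝ) (x : ℝ × ℝ) : ℝ := β 0 + 2 * β 3 * x.2 + β 5 * x.2 ^ 2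

/-- Component `K¹² = K²¹` of the general Killing two-tensor of the Euclidean plane. -/
def K12 (β : Fin 6 → ℝ) (x : ℝ × ℝ) : ℝ := β 2 - β 3 * x.1 - β 4 * x.2 - β 5 * x.1 * x.2

/-- Component `K²²` of the general Killing two-tensor of the Euclidean plane. -/
def K22 (β : Fin 6 → ℝ) (x : ℝ × ℝ) : ℝ := β 1 + 2 * β 4 * x.1 + β 5 * x.1 ^ 2

/-- The invariant `Δ₃(β) = (β₆(β₁−β₂) − β₄² + β₅²)² + 4(β₆β₃ + β₄β₅)²`. -/
def Delta3 (β : Fin 6 → ℝ) : ℝ :=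
  (β 5 * (β 0 - β 1) - (β 3) ^ 2 + (β 4) ^ 2) ^ 2 + 4 * (β 5 * β 2 + β 3 * β 4) ^ 2

/-- `σ(β) = β₄² − β₅² + β₆(β₂−β₁)`. -/
def sigma (β : Fin 6 → ℝ) : ℝ := (β 3) ^ 2 - (β 4) ^ 2 + β 5 * (β 1 - β 0)

/-- The first focus of the elliptic-hyperbolic web generated by `K(β)`. -/
noncomputable def F1 (β : Fin 6 → ℝ) : ℝ × ℝ :=
  (-(β 4) / β 5 + (1 / β 5) * Real.sqrt ((Real.sqrt (Delta3 β) - sigma β) / 2),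
   -(β 3) / β 5 + (1 / β 5) * Real.sqrt ((Real.sqrt (Delta3 β) + sigma β) / 2))

/-- The second focus of the elliptic-hyperbolic web generated by `K(β)`. -/
noncomputable def F2 (β : Fin 6 → ℝ) : ℝ × ℝ :=
  (-(β 4) / β 5 - (1 / β 5) * Real.sqrt ((Real.sqrt (Delta3 β) - sigma β) / 2),
   -(β 3) / β 5 - (1 / β 5) * Real.sqrt ((Real.sqrt (Delta3 β) + sigma β) / 2))

/-!
In the complex coordinate `z = (β₆x₁ + β₅) + i(β₆x₂ + β₄)` the two equations
`K¹¹ = K²²`, `K¹² = 0` (each multiplied by `β₆`) are the real and imaginary parts of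
`z² = w` with `w = −σ + 2i(β₆β₃ + β₄β₅)`. Since `|w|² = Δ₃ > 0`, this has exactly the
two solutions `z = ±√w`, and when `Im w ≥ 0` the principal root `√w` has real and
imaginary parts `√((√Δ₃ − σ)/2)` and `√((√Δ₃ + σ)/2)`, i.e. `z(F₁) = √w` and `z(F₂) = −√w`.
Indices here are 1-based, as in the paper: `βᵢ` is `β (i - 1)` in the code.
-/

namespace KillingTensor

variable {β : Fin 6 → ℝ}

def focalCoord (β : Fin 6 → ℝ) (x : ℝ × ℝ) : ℂ :=
  ⟨β 5 * x.1 + β 4, β 5 * x.2 + β 3⟩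

def focalSquare (β : Fin 6 → ℝ) : ℂ :=
  ⟨-sigma β, 2 * (β 5 * β 2 + β 3 * β 4)⟩

lemma focalCoord_injective (h6 : β 5 ≠ 0) : Function.Injective (focalCoord β) := by
  rintro ⟨x₁, x₂⟩ ⟨y₁, y₂⟩ h
  simp only [focalCoord, Complex.mk.injEq, add_left_inj, mul_right_inj' h6] at h
  rw [h.1, h.2]

lemma focalCoord_sq_eq_focalSquare_iff (h6 : β 5 ≠ 0) (x : ℝ × ℝ) :
    focalCoord β x ^ 2 = focalSquare β ↔ K11 β x = K22 β x ∧ K12 β x = 0 := by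
  have hre : (focalCoord β x ^ 2).re - (focalSquare β).re = -(β 5 * (K11 β x - K22 β x)) := by
    simp only [focalCoord, focalSquare, sigma, K11, K22, sq, Complex.mul_re]; ring
  have him : (focalCoord β x ^ 2).im - (focalSquare β).im = -(2 * β 5 * K12 β x) := by
    simp only [focalCoord, focalSquare, K12, sq, Complex.mul_im]; ring
  rw [Complex.ext_iff, ← sub_eq_zero, hre, ← sub_eq_zero (a := (focalCoord β x ^ 2).im), him]
  simp [h6, sub_eq_zero]

lemma norm_focalSquare : ‖focalSquare β‖ = √(Delta3 β) := by
  rw [Complex.norm_eq_sqrt_sq_add_sq]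
  congr 1
  simp only [focalSquare, Delta3, sigma]; ring

lemma focalCoord_F1 (h6 : β 5 ≠ 0) (hcross : β 5 * β 2 + β 3 * β 4 ≥ 0) :
    focalCoord β (F1 β) = Complex.sqrt (focalSquare β) := by
  have him : 0 ≤ (focalSquare β).im := by simp only [focalSquare]; positivity
  rw [Complex.sqrt_eq_real_add_ite, if_pos him, norm_focalSquare]
  apply Complex.ext <;> simp [focalCoord, focalSquare, F1, sub_eq_add_neg] <;> field_simp <;> ring

lemma focalCoord_F2 (h6 : β 5 ≠ 0) : focalCoord β (F2 β) = -focalCoord β (F1 β) := by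
  apply Complex.ext <;> simp [focalCoord, F1, F2] <;> field_simp <;> ring

lemma focalSquare_ne_zero (h3 : Delta3 β > 0) : focalSquare β ≠ 0 := by
  rw [← norm_ne_zero_iff, norm_focalSquare]
  exact (Real.sqrt_pos.mpr h3).ne'

end KillingTensor

open KillingTensor in
/-- For a nondegenerate Killing tensor `K(β)` of the Euclidean plane (with
`β₆ ≠ 0`, `β₆β₃ + β₄β₅ ≥ 0` and `Δ₃(β) > 0`), the set of singular points of the
coordinate web, i.e. points where the two eigenvalues of `K(β)` coincide, is
exactly the two-element set consisting of the foci `F₁(β) ≠ F₂(β)`. -/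
theorem singular_points_eq_foci
    (β : Fin 6 → ℝ) (h6 : β 5 ≠ 0) (hcross : β 5 * β 2 + β 3 * β 4 ≥ 0)
    (h3 : Delta3 β > 0) :
    {x : ℝ × ℝ | K11 β x = K22 β x ∧ K12 β x = 0} = {F1 β, F2 β} ∧ F1 β ≠ F2 β := by
  have hroot : Complex.sqrt (focalSquare β) ^ 2 = focalSquare β :=
    Complex.cpow_ofNat_inv_pow _ 2
  have hinj := focalCoord_injective h6
  refine ⟨Set.ext fun x => ?_, fun h => ?_⟩
  · rw [Set.mem_ofPred_eq, ← focalCoord_sq_eq_focalSquare_iff h6, ← hroot,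
      sq_eq_sq_iff_eq_or_eq_neg, ← focalCoord_F1 h6 hcross, ← focalCoord_F2 h6, hinj.eq_iff,
      hinj.eq_iff, Set.mem_insert_iff, Set.mem_singleton_iff]
  · have h := congrArg (focalCoord β) h
    rw [focalCoord_F2 h6, focalCoord_F1 h6 hcross, self_eq_neg] at h
    exact focalSquare_ne_zero h3 (by rw [← hroot, h, zero_pow two_ne_zero])
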